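/- Let A be a symmetric integer matrix, W = [e, Ae, …, A^{n−1}e], p an odd prime, and τ ≥ 1. Suppose rank of W mod p is n−1 and p^τ divides det W, and suppose z₀ is an integer vector with z₀ ≢ 0 (mod p) and Wᵀ z₀ ≡ 0 (mod p^τ). Then the set M = {z ∈ (ℤ/p^τℤ)^n : Wᵀ z = 0} is a free ℤ/p^τℤ-module of rank 1 with basis {z₀}, and consequently there exists an integer λ₀ with A z₀ ≡ λ₀ z₀ (mod p^τ). -/

import Mathlib

open Matrix

/-- The walk matrix `[e, Ae, …, A^{n-1}e]` of a square matrix `A`. -/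
noncomputable def walkMatrix {n : ℕ} {R : Type*} [CommRing R]
    (A : Matrix (Fin n) (Fin n) R) : Matrix (Fin n) (Fin n) R :=
  Matrix.of fun i j => ((A ^ (j : ℕ)) *ᵥ (fun _ => 1)) i

/-!
Modulo `p` the kernel of `Wᵀ` is the line spanned by `z₀`, because `W` has corank one there.
This lifts to `p ^ τ` by induction on the exponent: if `x ≡ c z₀ (mod p^k)` and
`Wᵀ x ≡ 0 (mod p^(k+1))`, then `(x - c z₀) / p^k` lies in the kernel mod `p`, which corrects `c`
by a multiple of `p^k`. A coordinate of `z₀` is prime to `p`, hence a unit mod `p ^ τ`, so `z₀`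
is also free. Finally the kernel of `Wᵀ` is `A`-invariant: for symmetric `A`,
`(Aᵏe)·(Az) = (Aᵏ⁺¹e)·z`, and `Aⁿe` is a combination of lower powers by Cayley–Hamilton.
So `A z₀` is a multiple of `z₀`.
-/

section WalkMatrix

variable {n : ℕ} {R : Type*} [CommRing R]

theorem walkMatrix_map {S : Type*} [CommRing S] (f : R →+* S) (A : Matrix (Fin n) (Fin n) R) :
    (walkMatrix A).map f = walkMatrix (A.map f) := by
  ext i j
  simp [walkMatrix, RingHom.map_mulVec, Matrix.map_pow, Function.comp_def]

theorem walkMatrix_transpose_mulVec_apply (A : Matrix (Fin n) (Fin n) R) (z : Fin n → R)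
    (i : Fin n) : ((walkMatrix A)ᵀ *ᵥ z) i = (A ^ (i : ℕ) *ᵥ fun _ => 1) ⬝ᵥ z := by
  simp [walkMatrix, mulVec, dotProduct]

theorem pow_card_mulVec_dotProduct_eq_zero {A : Matrix (Fin n) (Fin n) R}
    {z : Fin n → R} (hz : (walkMatrix A)ᵀ *ᵥ z = 0) :
    (A ^ n *ᵥ fun _ => 1) ⬝ᵥ z = 0 := by
  cases subsingleton_or_nontrivial R
  · exact Subsingleton.elim _ _
  have hlow : ∀ i < n, (A ^ i *ᵥ fun _ => 1) ⬝ᵥ z = 0 := fun i hi => by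
    rw [← walkMatrix_transpose_mulVec_apply A z ⟨i, hi⟩, hz, Pi.zero_apply]
  have hCH : A ^ n = -∑ i ∈ Finset.range n, A.charpoly.coeff i • A ^ i := by
    have h := A.aeval_self_charpoly
    rw [A.charpoly_monic.as_sum, charpoly_natDegree_eq_dim, Fintype.card_fin] at h
    simpa [eq_neg_iff_add_eq_zero, Algebra.smul_def] using h
  rw [hCH, neg_mulVec, neg_dotProduct, sum_mulVec, sum_dotProduct, neg_eq_zero]
  refine Finset.sum_eq_zero fun i hi => ?_
  rw [smul_mulVec, smul_dotProduct, hlow i (Finset.mem_range.1 hi), smul_zero]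

theorem walkMatrix_transpose_mulVec_mulVec_eq_zero {A : Matrix (Fin n) (Fin n) R}
    (hA : Aᵀ = A) {z : Fin n → R} (hz : (walkMatrix A)ᵀ *ᵥ z = 0) :
    (walkMatrix A)ᵀ *ᵥ (A *ᵥ z) = 0 := by
  funext i
  have hshift : (A ^ (i : ℕ) *ᵥ fun _ => 1) ⬝ᵥ (A *ᵥ z)
      = (A ^ ((i : ℕ) + 1) *ᵥ fun _ => 1) ⬝ᵥ z := by
    rw [dotProduct_mulVec, ← hA, vecMul_transpose, hA, mulVec_mulVec, ← pow_succ']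
  rw [walkMatrix_transpose_mulVec_apply, hshift, Pi.zero_apply]
  obtain hlt | heq : (i : ℕ) + 1 < n ∨ (i : ℕ) + 1 = n := by omega
  · rw [← walkMatrix_transpose_mulVec_apply A z ⟨_, hlt⟩, hz, Pi.zero_apply]
  · rw [heq]
    exact pow_card_mulVec_dotProduct_eq_zero hz

end WalkMatrix

theorem Submodule.exists_basis_fin_one {R M : Type*} [Ring R] [AddCommGroup M] [Module R M]
    {N : Submodule R M} {v : M} (hv : v ∈ N) (hspan : ∀ w ∈ N, ∃ c : R, c • v = w)
    (hfree : ∀ c : R, c • v = 0 → c = 0) :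
    ∃ b : Module.Basis (Fin 1) R N, (b 0 : M) = v := by
  have hli : LinearIndependent R (fun _ : Fin 1 => (⟨v, hv⟩ : N)) :=
    .of_subsingleton' 0 fun c hc => hfree c (congrArg Subtype.val hc)
  have hsp : ⊤ ≤ Submodule.span R (Set.range fun _ : Fin 1 => (⟨v, hv⟩ : N)) := by
    rintro ⟨w, hw⟩ -
    obtain ⟨c, hc⟩ := hspan w hw
    rw [Set.range_const, Submodule.mem_span_singleton]
    exact ⟨c, Subtype.ext hc⟩
  exact ⟨.mk hli hsp, by rw [Module.Basis.mk_apply]⟩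

theorem Matrix.exists_smul_eq_of_mem_ker_of_rank_eq {K ι κ : Type*} [Field K] [Fintype ι]
    {B : Matrix κ ι K} (hB : B.rank = Fintype.card ι - 1) {v w : ι → K}
    (hv : v ∈ LinearMap.ker B.mulVecLin) (hv0 : v ≠ 0) (hw : w ∈ LinearMap.ker B.mulVecLin) :
    ∃ c : K, c • v = w := by
  have hker : Module.finrank K (LinearMap.ker B.mulVecLin) = 1 := by
    have := LinearMap.finrank_range_add_finrank_ker B.mulVecLin
    rw [Module.finrank_fintype_fun_eq_card] at this
    have : 0 < Fintype.card ι := Fintype.card_pos_iff.2 ⟨(Function.ne_iff.1 hv0).choose⟩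
    unfold Matrix.rank at hB
    omega
  obtain ⟨c, hc⟩ := (finrank_eq_one_iff_of_nonzero' (⟨v, hv⟩ : LinearMap.ker B.mulVecLin)
    (by simpa using hv0)).1 hker ⟨w, hw⟩
  exact ⟨c, congrArg Subtype.val hc⟩

theorem exists_pow_dvd_sub_mul_of_pow_dvd_mulVec {R ι κ : Type*} [CommRing R] [IsDomain R]
    [Fintype ι] {p : R} (hp : p ≠ 0) {B : Matrix κ ι R} {z₀ : ι → R} {τ : ℕ}
    (hBz₀ : ∀ i, p ^ τ ∣ (B *ᵥ z₀) i)
    (hmodp : ∀ y : ι → R, (∀ i, p ∣ (B *ᵥ y) i) → ∃ d : R, ∀ i, p ∣ y i - d * z₀ i)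
    (x : ι → R) {k : ℕ} (hk : k ≤ τ) (hx : ∀ i, p ^ k ∣ (B *ᵥ x) i) :
    ∃ c : R, ∀ i, p ^ k ∣ x i - c * z₀ i := by
  induction k with
  | zero => exact ⟨0, by simp⟩
  | succ k ih =>
    obtain ⟨c, hc⟩ := ih (by omega) fun i => (pow_dvd_pow p k.le_succ).trans (hx i)
    choose y hy using hc
    have hBy : ∀ i, (B *ᵥ x) i - c * (B *ᵥ z₀) i = p ^ k * (B *ᵥ y) i := by
      have hvec : x - c • z₀ = p ^ k • y := funext fun i => by simpa using hy i
      intro i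
      simpa [mulVec_sub, mulVec_smul] using congrFun (congrArg (B *ᵥ ·) hvec) i
    have hBy_dvd : ∀ i, p ∣ (B *ᵥ y) i := fun i => by
      have h := dvd_sub (hx i) (((pow_dvd_pow p hk).trans (hBz₀ i)).mul_left c)
      rwa [hBy, pow_succ, mul_dvd_mul_iff_left (pow_ne_zero k hp)] at h
    obtain ⟨d, hd⟩ := hmodp y hBy_dvd
    refine ⟨c + d * p ^ k, fun i => ?_⟩
    have heq : x i - (c + d * p ^ k) * z₀ i = p ^ k * (y i - d * z₀ i) := by
      linear_combination hy i
    rw [heq, pow_succ]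
    exact mul_dvd_mul_left _ (hd i)

section IntCast

variable {ι κ : Type*} {m : ℕ}

theorem intCast_vec_eq_zero_iff (x : ι → ℤ) :
    (fun i => (x i : ZMod m)) = 0 ↔ ∀ i, (m : ℤ) ∣ x i := by
  simp [funext_iff, ZMod.intCast_zmod_eq_zero_iff_dvd]

theorem intCast_smul_vec_eq_iff (c : ℤ) (z x : ι → ℤ) :
    ((c : ZMod m) • fun i => (z i : ZMod m)) = (fun i => (x i : ZMod m)) ↔
      ∀ i, (m : ℤ) ∣ x i - c * z i := by
  simp [funext_iff, ← ZMod.intCast_eq_intCast_iff_dvd_sub]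

theorem eq_zero_of_smul_intCast_vec_eq_zero {p : ℕ} (hp : p.Prime) {τ : ℕ} {z₀ : ι → ℤ}
    (hz₀ : ¬ ∀ i, (p : ℤ) ∣ z₀ i) {c : ZMod (p ^ τ)}
    (hc : (c • fun i => (z₀ i : ZMod (p ^ τ))) = 0) : c = 0 := by
  obtain ⟨i₀, hi₀⟩ := not_forall.1 hz₀
  have hunit : IsUnit (z₀ i₀ : ZMod (p ^ τ)) := by
    rw [ZMod.coe_int_isUnit_iff_isCoprime, Nat.cast_pow]
    exact ((Nat.prime_iff_prime_int.1 hp).coprime_iff_not_dvd.2 hi₀).pow_left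
  exact hunit.mul_left_eq_zero.1 (congrFun hc i₀)

variable [Fintype ι]

theorem map_intCast_mulVec (B : Matrix κ ι ℤ) (x : ι → ℤ) :
    B.map (Int.cast : ℤ → ZMod m) *ᵥ (fun i => (x i : ZMod m)) =
      fun i => ((B *ᵥ x) i : ZMod m) :=
  funext fun i => (RingHom.map_mulVec (Int.castRingHom _) B x i).symm

theorem intCast_mem_ker_map_iff (B : Matrix κ ι ℤ) (x : ι → ℤ) :
    (fun i => (x i : ZMod m)) ∈ LinearMap.ker (B.map (Int.cast : ℤ → ZMod m)).mulVecLin ↔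
      ∀ i, (m : ℤ) ∣ (B *ᵥ x) i := by
  rw [LinearMap.mem_ker, mulVecLin_apply, map_intCast_mulVec, intCast_vec_eq_zero_iff]

theorem exists_smul_eq_of_mem_ker_map_intCast {B : Matrix κ ι ℤ} {z₀ : ι → ℤ}
    (hlift : ∀ x : ι → ℤ, (∀ i, (m : ℤ) ∣ (B *ᵥ x) i) → ∃ c : ℤ, ∀ i, (m : ℤ) ∣ x i - c * z₀ i)
    {w : ι → ZMod m} (hw : w ∈ LinearMap.ker (B.map (Int.cast : ℤ → ZMod m)).mulVecLin) :
    ∃ c : ZMod m, (c • fun i => (z₀ i : ZMod m)) = w := by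
  set x : ι → ℤ := fun i => ZMod.cast (w i)
  have hx : (fun i => (x i : ZMod m)) = w := funext fun i => ZMod.intCast_zmod_cast (w i)
  rw [← hx, intCast_mem_ker_map_iff] at hw
  obtain ⟨c, hc⟩ := hlift x hw
  exact ⟨c, hx ▸ (intCast_smul_vec_eq_iff c z₀ x).2 hc⟩

theorem exists_dvd_sub_mul_of_rank_map_eq {p : ℕ} (hp : p.Prime) {B : Matrix κ ι ℤ}
    (hB : (B.map (Int.cast : ℤ → ZMod p)).rank = Fintype.card ι - 1)
    {z₀ : ι → ℤ} (hz₀ : ¬ ∀ i, (p : ℤ) ∣ z₀ i) (hBz₀ : ∀ i, (p : ℤ) ∣ (B *ᵥ z₀) i)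
    {y : ι → ℤ} (hy : ∀ i, (p : ℤ) ∣ (B *ᵥ y) i) :
    ∃ d : ℤ, ∀ i, (p : ℤ) ∣ y i - d * z₀ i := by
  have : Fact p.Prime := ⟨hp⟩
  obtain ⟨c, hc⟩ := exists_smul_eq_of_mem_ker_of_rank_eq hB
    ((intCast_mem_ker_map_iff B z₀).2 hBz₀) (mt (intCast_vec_eq_zero_iff z₀).1 hz₀)
    ((intCast_mem_ker_map_iff B y).2 hy)
  refine ⟨ZMod.cast c, (intCast_smul_vec_eq_iff _ z₀ y).1 ?_⟩
  rwa [ZMod.intCast_zmod_cast]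

theorem exists_smul_eq_of_mem_ker_map_intCast_pow {p : ℕ} (hp : p.Prime) {τ : ℕ} (hτ : 1 ≤ τ)
    {B : Matrix κ ι ℤ} (hB : (B.map (Int.cast : ℤ → ZMod p)).rank = Fintype.card ι - 1)
    {z₀ : ι → ℤ} (hz₀ : ¬ ∀ i, (p : ℤ) ∣ z₀ i) (hBz₀ : ∀ i, (p : ℤ) ^ τ ∣ (B *ᵥ z₀) i) :
    ∀ w ∈ LinearMap.ker (B.map (Int.cast : ℤ → ZMod (p ^ τ))).mulVecLin,
      ∃ c : ZMod (p ^ τ), (c • fun i => (z₀ i : ZMod (p ^ τ))) = w := by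
  refine fun w hw => exists_smul_eq_of_mem_ker_map_intCast (fun x hx => ?_) hw
  push_cast at hx ⊢
  exact exists_pow_dvd_sub_mul_of_pow_dvd_mulVec (Int.natCast_ne_zero.2 hp.ne_zero) hBz₀
    (fun y hy => exists_dvd_sub_mul_of_rank_map_eq hp hB hz₀
      (fun i => (dvd_pow_self _ (by omega)).trans (hBz₀ i)) hy) x le_rfl hx

end IntCast

theorem kernel_rank_one_and_eigenvector_mod_general
    {n : ℕ} (p : ℕ) (hp : p.Prime) (τ : ℕ) (hτ : 1 ≤ τ)
    (A : Matrix (Fin n) (Fin n) ℤ) (hsymm : Aᵀ = A)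
    (W : Matrix (Fin n) (Fin n) ℤ) (hW : W = walkMatrix A)
    (hrank : (W.map (Int.cast : ℤ → ZMod p)).rank = n - 1)
    (z₀ : Fin n → ℤ) (hz₀p : ¬ (∀ i, (p : ℤ) ∣ z₀ i))
    (hWz₀ : ∀ i, (p : ℤ) ^ τ ∣ (Wᵀ *ᵥ z₀) i) :
    (∃ b : Module.Basis (Fin 1) (ZMod (p ^ τ))
        (LinearMap.ker (Wᵀ.map (Int.cast : ℤ → ZMod (p ^ τ))).mulVecLin),
      (b 0 : Fin n → ZMod (p ^ τ)) = fun i => ((z₀ i : ZMod (p ^ τ)))) ∧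
    ∃ lam : ℤ, ∀ i, (p : ℤ) ^ τ ∣ (A *ᵥ z₀ - lam • z₀) i := by
  have : Fact p.Prime := ⟨hp⟩
  have hpτ : ((p ^ τ : ℕ) : ℤ) = (p : ℤ) ^ τ := Nat.cast_pow p τ
  have hrank' : (Wᵀ.map (Int.cast : ℤ → ZMod p)).rank = Fintype.card (Fin n) - 1 := by
    rwa [transpose_map, rank_transpose, Fintype.card_fin]
  have hzb : (fun i => (z₀ i : ZMod (p ^ τ))) ∈
      LinearMap.ker (Wᵀ.map (Int.cast : ℤ → ZMod (p ^ τ))).mulVecLin :=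
    (intCast_mem_ker_map_iff _ z₀).2 (hpτ ▸ hWz₀)
  have hspan := exists_smul_eq_of_mem_ker_map_intCast_pow hp hτ hrank' hz₀p hWz₀
  refine ⟨Submodule.exists_basis_fin_one hzb hspan
    fun c => eq_zero_of_smul_intCast_vec_eq_zero hp hz₀p, ?_⟩
  have hAzb : (A.map (Int.cast : ℤ → ZMod (p ^ τ))) *ᵥ (fun i => (z₀ i : ZMod (p ^ τ))) ∈
      LinearMap.ker (Wᵀ.map (Int.cast : ℤ → ZMod (p ^ τ))).mulVecLin := by
    subst hW
    have hmap : (walkMatrix A).map (Int.cast : ℤ → ZMod (p ^ τ)) = walkMatrix (A.map Int.cast) :=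
      walkMatrix_map (Int.castRingHom (ZMod (p ^ τ))) A
    rw [LinearMap.mem_ker, mulVecLin_apply, transpose_map, hmap] at hzb ⊢
    exact walkMatrix_transpose_mulVec_mulVec_eq_zero (by rw [← transpose_map, hsymm]) hzb
  obtain ⟨c, hc⟩ := hspan _ hAzb
  obtain ⟨lam, rfl⟩ := ZMod.intCast_surjective c
  rw [map_intCast_mulVec, intCast_smul_vec_eq_iff, hpτ] at hc
  exact ⟨lam, fun i => by simpa using hc i⟩

/-- If `rank_p W = n-1`, `p^τ ∣ det W`, and `z₀ ≢ 0 (mod p)` satisfies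
`Wᵀ z₀ ≡ 0 (mod p^τ)`, then `{z ∈ (ℤ/p^τℤ)^n : Wᵀ z = 0}` is a free
`ℤ/p^τℤ`-module of rank `1` with basis `{z₀}`, and there is an integer `λ₀`
with `A z₀ ≡ λ₀ z₀ (mod p^τ)`. -/
theorem kernel_rank_one_and_eigenvector_mod
    {n : ℕ} (p : ℕ) (hp : p.Prime) (hodd : Odd p) (τ : ℕ) (hτ : 1 ≤ τ)
    (A : Matrix (Fin n) (Fin n) ℤ) (hsymm : Aᵀ = A)
    (W : Matrix (Fin n) (Fin n) ℤ) (hW : W = walkMatrix A)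
    (hrank : (W.map (Int.cast : ℤ → ZMod p)).rank = n - 1)
    (hdet : (p : ℤ) ^ τ ∣ W.det)
    (z₀ : Fin n → ℤ) (hz₀p : ¬ (∀ i, (p : ℤ) ∣ z₀ i))
    (hWz₀ : ∀ i, (p : ℤ) ^ τ ∣ (Wᵀ *ᵥ z₀) i) :
    (∃ b : Module.Basis (Fin 1) (ZMod (p ^ τ))
        (LinearMap.ker (Wᵀ.map (Int.cast : ℤ → ZMod (p ^ τ))).mulVecLin),
      (b 0 : Fin n → ZMod (p ^ τ)) = fun i => ((z₀ i : ZMod (p ^ τ)))) ∧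
    ∃ lam : ℤ, ∀ i, (p : ℤ) ^ τ ∣ (A *ᵥ z₀ - lam • z₀) i :=
  kernel_rank_one_and_eigenvector_mod_general p hp τ hτ A hsymm W hW hrank z₀ hz₀p hWz₀
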